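/- arXiv:2508.17279 — 4 statements merged into one kernel-verified Lean document; each statement's English description precedes it below -/
import Mathlib

section
/- Let I be a finite set and let I_1, …, I_m be subsets of I. For each 1 ≤ i ≤ m let M_i be a real symmetric matrix with rows and columns indexed by I_i, and let s_i : I_i → ℝ be functions such that for every σ ∈ I one has ∑_{i : σ ∈ I_i} s_i(σ)² = 1. Define the matrix M with rows and columns indexed by I by M_{σ,τ} = ∑_{i : σ,τ ∈ I_i} s_i(σ) s_i(τ) (M_i)_{σ,τ}. Then for every 1 ≤ k ≤ |I|, the k-th largest eigenvalue of M is at most the k-th largest eigenvalue of the block-diagonal direct sum ⊕_{i=1}^m M_i. -/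
open Matrix BigOperators

namespace Garland

variable {V : Type*}

/-- A (nonempty) simplicial complex on vertex set `V`: a family of finite subsets of `V`
closed under taking subsets. -/
def IsComplex [DecidableEq V] (X : Finset (Finset V)) : Prop :=
  X.Nonempty ∧ ∀ σ ∈ X, ∀ τ ⊆ σ, τ ∈ X

/-- The faces of `X` of cardinality `n` (i.e. of dimension `n - 1`);
`X(k)` in the paper is `facesC X (k+1)`. -/
def facesC [DecidableEq V] (X : Finset (Finset V)) (n : ℕ) : Finset (Finset V) :=
  X.filter fun σ => σ.card = n

/-- The dimension of the complex `X` (largest cardinality of a face, minus one). -/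
def dimX (X : Finset (Finset V)) : ℕ := X.sup Finset.card - 1

/-- `X` is a pure `d`-dimensional complex: every face is contained in a face of dimension `d`. -/
def IsPure [DecidableEq V] (X : Finset (Finset V)) (d : ℕ) : Prop :=
  IsComplex X ∧ ∀ σ ∈ X, ∃ τ ∈ X, σ ⊆ τ ∧ τ.card = d + 1

/-- The incidence sign `(τ:σ) = (-1)^{|{v ∈ τ : v < u}|}` where `u` is the unique element of
`τ \ σ` (meaningful when `σ ⊆ τ` and `|τ \ σ| = 1`). -/
noncomputable def incSign [LinearOrder V] (τ σ : Finset V) : ℝ :=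
  ∑ u ∈ τ \ σ, (-1 : ℝ) ^ (τ.filter fun v => v < u).card

/-- The boundary matrix `∂_n(X)`: rows are indexed by the cardinality-`n` faces (dimension
`n-1`) and columns by the cardinality-`n+1` faces (dimension `n`). -/
noncomputable def bdry [LinearOrder V] (X : Finset (Finset V)) (n : ℕ) :
    Matrix {σ : Finset V // σ ∈ facesC X n} {τ : Finset V // τ ∈ facesC X (n + 1)} ℝ :=
  Matrix.of fun σ τ => if σ.1 ⊆ τ.1 then incSign τ.1 σ.1 else 0

/-- The diagonal weight matrix on the cardinality-`n` faces. -/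
noncomputable def Wmat [LinearOrder V] (X : Finset (Finset V)) (w : Finset V → ℝ) (n : ℕ) :
    Matrix {σ : Finset V // σ ∈ facesC X n} {σ : Finset V // σ ∈ facesC X n} ℝ :=
  Matrix.diagonal fun σ => w σ.1

/-- The diagonal matrix `W^{1/2}` on the cardinality-`n` faces. -/
noncomputable def WmatSqrt [LinearOrder V] (X : Finset (Finset V)) (w : Finset V → ℝ) (n : ℕ) :
    Matrix {σ : Finset V // σ ∈ facesC X n} {σ : Finset V // σ ∈ facesC X n} ℝ :=
  Matrix.diagonal fun σ => Real.sqrt (w σ.1)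

/-- The `k`-dimensional `w`-weighted upper Laplacian
`L_k^+ = W_k⁻¹ ∂_{k+1} W_{k+1} ∂_{k+1}ᵀ` (automatically `0` when `k = dim X`, since then there
are no faces of dimension `k+1`). -/
noncomputable def lapUp [LinearOrder V] (X : Finset (Finset V)) (w : Finset V → ℝ) (k : ℕ) :
    Matrix {σ : Finset V // σ ∈ facesC X (k + 1)} {σ : Finset V // σ ∈ facesC X (k + 1)} ℝ :=
  (Wmat X w (k + 1))⁻¹ * bdry X (k + 1) * Wmat X w (k + 2) * (bdry X (k + 1))ᵀ

/-- The `k`-dimensional `w`-weighted lower Laplacian `L_k^- = ∂_kᵀ W_{k-1}⁻¹ ∂_k W_k`. -/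
noncomputable def lapDown [LinearOrder V] (X : Finset (Finset V)) (w : Finset V → ℝ) (k : ℕ) :
    Matrix {σ : Finset V // σ ∈ facesC X (k + 1)} {σ : Finset V // σ ∈ facesC X (k + 1)} ℝ :=
  (bdry X k)ᵀ * (Wmat X w k)⁻¹ * bdry X k * Wmat X w (k + 1)

/-- The `k`-dimensional `w`-weighted total Laplacian. -/
noncomputable def lapTot [LinearOrder V] (X : Finset (Finset V)) (w : Finset V → ℝ) (k : ℕ) :
    Matrix {σ : Finset V // σ ∈ facesC X (k + 1)} {σ : Finset V // σ ∈ facesC X (k + 1)} ℝ :=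
  lapUp X w k + lapDown X w k

/-- The symmetric `w`-weighted upper Laplacian
`L̂_k^+ = W_k^{-1/2} ∂_{k+1} W_{k+1} ∂_{k+1}ᵀ W_k^{-1/2}`. -/
noncomputable def symLapUp [LinearOrder V] (X : Finset (Finset V)) (w : Finset V → ℝ) (k : ℕ) :
    Matrix {σ : Finset V // σ ∈ facesC X (k + 1)} {σ : Finset V // σ ∈ facesC X (k + 1)} ℝ :=
  (WmatSqrt X w (k + 1))⁻¹ * bdry X (k + 1) * Wmat X w (k + 2) * (bdry X (k + 1))ᵀ *
    (WmatSqrt X w (k + 1))⁻¹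

/-- The symmetric `w`-weighted lower Laplacian `L̂_k^- = W_k^{1/2} ∂_kᵀ W_{k-1}⁻¹ ∂_k W_k^{1/2}`. -/
noncomputable def symLapDown [LinearOrder V] (X : Finset (Finset V)) (w : Finset V → ℝ) (k : ℕ) :
    Matrix {σ : Finset V // σ ∈ facesC X (k + 1)} {σ : Finset V // σ ∈ facesC X (k + 1)} ℝ :=
  WmatSqrt X w (k + 1) * (bdry X k)ᵀ * (Wmat X w k)⁻¹ * bdry X k * WmatSqrt X w (k + 1)

/-- The unweighted upper Laplacian `L_k^+ = ∂_{k+1} ∂_{k+1}ᵀ`. -/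
noncomputable def ulapUp [LinearOrder V] (X : Finset (Finset V)) (k : ℕ) :
    Matrix {σ : Finset V // σ ∈ facesC X (k + 1)} {σ : Finset V // σ ∈ facesC X (k + 1)} ℝ :=
  bdry X (k + 1) * (bdry X (k + 1))ᵀ

/-- The unweighted lower Laplacian `L_k^- = ∂_kᵀ ∂_k`. -/
noncomputable def ulapDown [LinearOrder V] (X : Finset (Finset V)) (k : ℕ) :
    Matrix {σ : Finset V // σ ∈ facesC X (k + 1)} {σ : Finset V // σ ∈ facesC X (k + 1)} ℝ :=
  (bdry X k)ᵀ * bdry X k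

/-- The unweighted total Laplacian `L_k = L_k^+ + L_k^-`. -/
noncomputable def ulapTot [LinearOrder V] (X : Finset (Finset V)) (k : ℕ) :
    Matrix {σ : Finset V // σ ∈ facesC X (k + 1)} {σ : Finset V // σ ∈ facesC X (k + 1)} ℝ :=
  ulapUp X k + ulapDown X k

/-- The link of a simplex `η` in `X`. -/
def link [DecidableEq V] (X : Finset (Finset V)) (η : Finset V) : Finset (Finset V) :=
  X.filter fun τ => τ ∩ η = ∅ ∧ τ ∪ η ∈ X

/-- The weight function of a pure `d`-dimensional complex:
`w(σ) = |{τ ∈ X(d) : σ ⊆ τ}|`. -/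
noncomputable def pureWeight [DecidableEq V] (X : Finset (Finset V)) (d : ℕ) :
    Finset V → ℝ :=
  fun σ => ((facesC X (d + 1)).filter fun τ => σ ⊆ τ).card

/-- The weighted degree `∑_{v ∈ N_X(σ)} w(σ ∪ {v}) / w(σ)` of a face `σ`. -/
noncomputable def wdeg [Fintype V] [DecidableEq V] (X : Finset (Finset V))
    (w : Finset V → ℝ) (σ : Finset V) : ℝ :=
  ∑ v ∈ Finset.univ.filter (fun v => v ∉ σ ∧ insert v σ ∈ X), w (insert v σ) / w σ

/-- `Δ_k(X;w)`: the maximal weighted degree of a `k`-dimensional face. -/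
noncomputable def maxWdeg [Fintype V] [DecidableEq V] (X : Finset (Finset V))
    (w : Finset V → ℝ) (k : ℕ) : ℝ :=
  sSup (wdeg X w '' (facesC X (k + 1) : Set (Finset V)))

/-- `δ_k(X;w)`: the minimal weighted degree of a `k`-dimensional face. -/
noncomputable def minWdeg [Fintype V] [DecidableEq V] (X : Finset (Finset V))
    (w : Finset V → ℝ) (k : ℕ) : ℝ :=
  sInf (wdeg X w '' (facesC X (k + 1) : Set (Finset V)))

/-- The (unweighted) degree of a `k`-dimensional face: the number of `(k+1)`-dimensional
faces containing it. -/
def degU [DecidableEq V] (X : Finset (Finset V)) (k : ℕ) (σ : Finset V) : ℕ :=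
  ((facesC X (k + 2)).filter fun τ => σ ⊆ τ).card

/-- `Δ_k(X)`: the maximal degree of a `k`-dimensional face. -/
def maxDeg [DecidableEq V] (X : Finset (Finset V)) (k : ℕ) : ℕ :=
  (facesC X (k + 1)).sup (degU X k)

/-- `δ_k(X)`: the minimal degree of a `k`-dimensional face. -/
noncomputable def minDeg [DecidableEq V] (X : Finset (Finset V)) (k : ℕ) : ℕ :=
  sInf (degU X k '' (facesC X (k + 1) : Set (Finset V)))

/-- The spectrum of a real matrix, as the multiset of roots of its characteristic
polynomial (for a matrix that is diagonalizable with real eigenvalues, this is exactly the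
multiset of its eigenvalues, with multiplicity). -/
noncomputable def specM {n : Type*} [Fintype n] [DecidableEq n] (M : Matrix n n ℝ) :
    Multiset ℝ :=
  M.charpoly.roots

/-- `eigAsc M i` is the `i`-th smallest eigenvalue (1-based) of `M`. -/
noncomputable def eigAsc {n : Type*} [Fintype n] [DecidableEq n] (M : Matrix n n ℝ)
    (i : ℕ) : ℝ :=
  ((specM M).sort (· ≤ ·)).getD (i - 1) 0

/-- `eigDesc M i` is the `i`-th largest eigenvalue (1-based) of `M`. -/
noncomputable def eigDesc {n : Type*} [Fintype n] [DecidableEq n] (M : Matrix n n ℝ)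
    (i : ℕ) : ℝ :=
  ((specM M).sort (· ≤ ·)).reverse.getD (i - 1) 0

/-- The dimension of the `k`-th reduced homology `H̃_k(X;ℝ) = ker ∂_k / im ∂_{k+1}`
(the quotient of the kernel of `∂_k` by the image of `∂_{k+1}`, which is contained in the
kernel for a simplicial complex). -/
noncomputable def homologyDim [LinearOrder V] (X : Finset (Finset V)) (k : ℕ) : ℕ :=
  Module.finrank ℝ
    (LinearMap.ker (Matrix.mulVecLin (bdry X k)) ⧸
      Submodule.comap (LinearMap.ker (Matrix.mulVecLin (bdry X k))).subtype
        (LinearMap.range (Matrix.mulVecLin (bdry X (k + 1)))))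

/-- `s_η(σ) = C(|σ|, ℓ+1)^{-1/2} · (-1)^{|{(i,j) : i ∈ σ∖η, j ∈ η, i > j}|}`. -/
noncomputable def sCoef [LinearOrder V] (ℓ : ℕ) (η σ : Finset V) : ℝ :=
  (Real.sqrt ((σ.card).choose (ℓ + 1)))⁻¹ *
    (-1 : ℝ) ^ (((σ \ η) ×ˢ η).filter fun p => p.2 < p.1).card

/-- The `(a,b)` entry of the symmetric weighted upper Laplacian `L̂_m^+(Y;w)`, as a function
of arbitrary finsets `a b` (zero junk value if `a` or `b` is not an `m`-dimensional face). -/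
noncomputable def symLapUpE [LinearOrder V] (Y : Finset (Finset V)) (w : Finset V → ℝ)
    (m : ℕ) (a b : Finset V) : ℝ :=
  if h : a ∈ facesC Y (m + 1) ∧ b ∈ facesC Y (m + 1) then
    symLapUp Y w m ⟨a, h.1⟩ ⟨b, h.2⟩
  else 0

/-- The `(a,b)` entry of the symmetric weighted lower Laplacian `L̂_m^-(Y;w)`, as a function
of arbitrary finsets `a b` (zero junk value if `a` or `b` is not an `m`-dimensional face). -/
noncomputable def symLapDownE [LinearOrder V] (Y : Finset (Finset V)) (w : Finset V → ℝ)
    (m : ℕ) (a b : Finset V) : ℝ :=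
  if h : a ∈ facesC Y (m + 1) ∧ b ∈ facesC Y (m + 1) then
    symLapDown Y w m ⟨a, h.1⟩ ⟨b, h.2⟩
  else 0


section AuxGarland
open Matrix Polynomial Module

variable {n : Type*} [Fintype n] [DecidableEq n]

lemma charpoly_conj (U V A : Matrix n n ℝ) (hUV : U * V = 1) (hVU : V * U = 1) :
    (U * A * V).charpoly = A.charpoly := by
  unfold Matrix.charpoly
  have key : charmatrix (U * A * V) =
      U.map C * charmatrix A * V.map C := by
    unfold charmatrix
    rw [Matrix.mul_sub, Matrix.sub_mul]
    congr 1
    · rw [mul_assoc, (Matrix.scalar_commute X (fun r => Commute.all X r) (V.map C)).eq,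
        ← mul_assoc, ← Matrix.map_mul, hUV, Matrix.map_one _ (map_zero C) (map_one C), one_mul]
    · simp [Matrix.map_mul]
  rw [key, det_mul, det_mul, mul_comm, ← mul_assoc, ← det_mul, ← Matrix.map_mul, hVU,
    Matrix.map_one _ (map_zero C) (map_one C), det_one, one_mul]

lemma charpoly_diag (d : n → ℝ) :
    (Matrix.diagonal d).charpoly = ∏ i, (X - C (d i)) := by
  unfold Matrix.charpoly
  have : charmatrix (Matrix.diagonal d) = Matrix.diagonal fun i => X - C (d i) := by
    ext i j
    by_cases h : i = j
    · subst h; simp [charmatrix_apply_eq]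
    · simp [charmatrix_apply_ne _ _ _ h, Matrix.diagonal_apply_ne _ h]
  rw [this, det_diagonal]

lemma specM_eq (A : Matrix n n ℝ) (hA : A.IsHermitian) :
    A.charpoly.roots = Multiset.map hA.eigenvalues Finset.univ.val := by
  have hU1 : (hA.eigenvectorUnitary : Matrix n n ℝ) * star (hA.eigenvectorUnitary : Matrix n n ℝ) = 1 :=
    Matrix.mem_unitaryGroup_iff.mp hA.eigenvectorUnitary.2
  have hU2 : star (hA.eigenvectorUnitary : Matrix n n ℝ) * (hA.eigenvectorUnitary : Matrix n n ℝ) = 1 :=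
    Matrix.mem_unitaryGroup_iff'.mp hA.eigenvectorUnitary.2
  have hd : (RCLike.ofReal ∘ hA.eigenvalues : n → ℝ) = hA.eigenvalues := by
    funext i; simp
  have h1 : A.charpoly = (Matrix.diagonal hA.eigenvalues).charpoly := by
    conv_lhs => rw [hA.spectral_theorem]
    rw [Unitary.conjStarAlgAut_apply, charpoly_conj _ _ _ hU1 hU2, hd]
  rw [h1, charpoly_diag]
  rw [Finset.prod_eq_multiset_prod,
    show Multiset.map (fun i => X - C (hA.eigenvalues i)) Finset.univ.val
      = Multiset.map (fun a => X - C a) (Multiset.map hA.eigenvalues Finset.univ.val) by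
        rw [Multiset.map_map]; rfl]
  exact roots_multiset_prod_X_sub_C _
open Multiset

-- descending k-th element (1-based) of multiset s
noncomputable def kdesc (s : Multiset ℝ) (k : ℕ) : ℝ :=
  ((s.sort (· ≤ ·)).reverse).getD (k - 1) 0

lemma kdesc_eq_getElem (s : Multiset ℝ) (k : ℕ) (hk1 : 1 ≤ k) (hk2 : k ≤ Multiset.card s) :
    ∀ h : Multiset.card s - k < (s.sort (· ≤ ·)).length,
    kdesc s k = (s.sort (· ≤ ·))[Multiset.card s - k] := by
  intro h
  have hlen : (s.sort (· ≤ ·)).length = Multiset.card s := s.length_sort _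
  have h1 : k - 1 < (s.sort (· ≤ ·)).reverse.length := by
    rw [List.length_reverse, hlen]; omega
  rw [kdesc, List.getD_eq_getElem _ _ h1, List.getElem_reverse]
  congr 1
  rw [List.length_reverse, hlen] at *
  omega

lemma count_ge_kdesc (s : Multiset ℝ) (k : ℕ) (hk1 : 1 ≤ k) (hk2 : k ≤ Multiset.card s)
    (μ : ℝ) (hμle : μ ≤ kdesc s k) :
    k ≤ Multiset.card (s.filter (fun x => μ ≤ x)) := by
  set l := s.sort (· ≤ ·) with hl
  have hlen : l.length = Multiset.card s := s.length_sort _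
  have hsort : l.Pairwise (· ≤ ·) := s.pairwise_sort _
  have hidx : Multiset.card s - k < l.length := by omega
  have hμ : kdesc s k = l[Multiset.card s - k] := kdesc_eq_getElem s k hk1 hk2 hidx
  have hs : s = (l : Multiset ℝ) := (s.sort_eq _).symm
  conv_rhs => rw [hs, Multiset.filter_coe, Multiset.coe_card]
  set j := Multiset.card s - k with hj
  -- all elements of l.drop j satisfy the predicate
  have hall : ∀ x ∈ l.drop j, μ ≤ x := by
    intro x hx
    obtain ⟨i, hi, rfl⟩ := List.mem_iff_getElem.mp hx
    have hi' : j + i < l.length := by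
      have := List.length_drop (i := j) (l := l); omega
    rw [List.getElem_drop]
    rcases Nat.eq_zero_or_pos i with h0 | h0
    · subst h0
      refine le_trans hμle ?_
      rw [hμ]
      simp [hj]
    · refine le_trans hμle ?_
      rw [hμ]
      exact List.pairwise_iff_getElem.mp hsort j (j + i) hidx hi' (by omega)
  have hsub : List.Sublist ((l.drop j).filter (fun x => decide (μ ≤ x)))
      (l.filter (fun x => decide (μ ≤ x))) := (List.drop_sublist j l).filter _
  have heq : (l.drop j).filter (fun x => decide (μ ≤ x)) = l.drop j :=
    List.filter_eq_self.mpr (fun a ha => by simpa using hall a ha)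
  have := hsub.length_le
  rw [heq, List.length_drop] at this
  omega

lemma count_le_kdesc (s : Multiset ℝ) (k : ℕ) (hk1 : 1 ≤ k) (hk2 : k ≤ Multiset.card s)
    (μ : ℝ) (hμ : kdesc s k < μ) :
    Multiset.card (s.filter (fun x => μ ≤ x)) ≤ k - 1 := by
  set l := s.sort (· ≤ ·) with hl
  have hlen : l.length = Multiset.card s := s.length_sort _
  have hsort : l.Pairwise (· ≤ ·) := s.pairwise_sort _
  have hidx : Multiset.card s - k < l.length := by omega
  have hν : kdesc s k = l[Multiset.card s - k] := kdesc_eq_getElem s k hk1 hk2 hidx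
  have hs : s = (l : Multiset ℝ) := (s.sort_eq _).symm
  rw [hs, Multiset.filter_coe, Multiset.coe_card]
  set j := Multiset.card s - k with hj
  have hall : ∀ x ∈ l.take (j + 1), ¬ (μ ≤ x) := by
    intro x hx
    obtain ⟨i, hi, rfl⟩ := List.mem_iff_getElem.mp hx
    rw [List.getElem_take]
    have hi' : i < j + 1 := by
      have := List.length_take (i := j+1) (l := l); omega
    have hle : l[i] ≤ l[j] := by
      rcases Nat.lt_or_ge i j with h0 | h0
      · exact List.pairwise_iff_getElem.mp hsort i j (by omega) hidx h0
      · have : i = j := by omega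
        subst this; exact le_refl _
    push_neg
    calc l[i] ≤ l[j] := hle
    _ < μ := by rw [← hν]; exact hμ
  have h1 : (l.take (j+1)).filter (fun x => decide (μ ≤ x)) = [] :=
    List.filter_eq_nil_iff.mpr (fun a ha => by simpa using hall a ha)
  have h2 : l = l.take (j+1) ++ l.drop (j+1) := (List.take_append_drop _ _).symm
  conv_lhs => rw [h2]
  rw [List.filter_append, h1, List.nil_append]
  have := List.length_filter_le (fun x => decide (μ ≤ x)) (l.drop (j+1))
  rw [List.length_drop] at this
  omega

variable {n : Type*} [Fintype n] [DecidableEq n]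

local notation "⟪" x ", " y "⟫" => inner (𝕜 := ℝ) x y

lemma inner_te {m : Type*} [Fintype m] [DecidableEq m] (A : Matrix m n ℝ)
    (x : EuclideanSpace ℝ n) (y : EuclideanSpace ℝ m) :
    ⟪toEuclideanLin A x, y⟫ = ⟪x, toEuclideanLin Aᵀ y⟫ := by
  simp only [PiLp.inner_apply, RCLike.inner_apply, conj_trivial, toEuclideanLin_apply]
  simp only [PiLp.toLp_apply, mulVec, dotProduct,
    transpose_apply, Finset.sum_mul, Finset.mul_sum]
  rw [Finset.sum_comm]
  apply Finset.sum_congr rfl; intro i _; apply Finset.sum_congr rfl; intro j _; ring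

lemma toEuclideanLin_mul {m p : Type*} [Fintype m] [Fintype p] [DecidableEq m] [DecidableEq p]
    (A : Matrix m n ℝ) (B : Matrix n p ℝ) (x : EuclideanSpace ℝ p) :
    toEuclideanLin (A * B) x = toEuclideanLin A (toEuclideanLin B x) := by
  simp only [toEuclideanLin_apply]
  simp [mulVec_mulVec]

lemma toEuclideanLin_one (x : EuclideanSpace ℝ n) :
    toEuclideanLin (1 : Matrix n n ℝ) x = x := by
  simp only [toEuclideanLin_apply, one_mulVec]

lemma repr_zero_of_span (b : OrthonormalBasis n ℝ (EuclideanSpace ℝ n)) (P : Finset n)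
    (x : EuclideanSpace ℝ n) (hx : x ∈ Submodule.span ℝ (b '' ↑P)) (i : n) (hi : i ∉ P) :
    b.repr x i = 0 := by
  induction hx using Submodule.span_induction with
  | mem y hy =>
    obtain ⟨j, hj, rfl⟩ := hy
    rw [b.repr_self]
    have : i ≠ j := fun h => hi (h ▸ hj)
    simp [EuclideanSpace.single_apply, this]
  | zero => simp
  | add y z _ _ hy hz => simp [hy, hz]
  | smul c y _ hy => simp [hy]

lemma finrank_span_b (b : OrthonormalBasis n ℝ (EuclideanSpace ℝ n)) (P : Finset n) :
    finrank ℝ (Submodule.span ℝ (b '' ↑P)) = P.card := by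
  have h1 : b '' ↑P = Set.range (⇑b ∘ (Subtype.val : {x // x ∈ P} → n)) := by
    ext y; simp [Set.mem_image, Set.range_comp]
  rw [h1, finrank_span_eq_card ((b.orthonormal.linearIndependent).comp _ Subtype.val_injective)]
  simp [Fintype.card_coe]

lemma inner_self_eq_sum_sq (b : OrthonormalBasis n ℝ (EuclideanSpace ℝ n))
    (x : EuclideanSpace ℝ n) : ⟪x, x⟫ = ∑ i, (b.repr x i) ^ 2 := by
  rw [← b.repr.inner_map_map x x]
  simp only [PiLp.inner_apply, RCLike.inner_apply, conj_trivial, sq]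

lemma inner_toEuclideanLin_eq_sum (A : Matrix n n ℝ) (hA : A.IsHermitian)
    (x : EuclideanSpace ℝ n) :
    ⟪toEuclideanLin A x, x⟫ =
      ∑ i, hA.eigenvalues i * (hA.eigenvectorBasis.repr x i) ^ 2 := by
  set b := hA.eigenvectorBasis
  have hT : (toEuclideanLin A).IsSymmetric := isHermitian_iff_isSymmetric.1 hA
  have hrepr : ∀ i, b.repr (toEuclideanLin A x) i = hA.eigenvalues i * b.repr x i := by
    intro i
    rw [b.repr_apply_apply, ← hT (b i) x, b.repr_apply_apply]
    have hb : toEuclideanLin A (b i) = hA.eigenvalues i • b i := by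
      apply (WithLp.equiv 2 _).injective
      simpa [toEuclideanLin_apply] using hA.mulVec_eigenvectorBasis i
    rw [hb, inner_smul_left]
    simp
  rw [← b.repr.inner_map_map (toEuclideanLin A x) x]
  simp only [PiLp.inner_apply, RCLike.inner_apply, conj_trivial]
  apply Finset.sum_congr rfl
  intro i _
  rw [hrepr i]; ring

lemma rayleigh_ge (A : Matrix n n ℝ) (hA : A.IsHermitian) (μ : ℝ) (x : EuclideanSpace ℝ n)
    (hx : x ∈ Submodule.span ℝ
      (hA.eigenvectorBasis '' ↑(Finset.univ.filter (fun i => μ ≤ hA.eigenvalues i)))) :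
    μ * ⟪x, x⟫ ≤ ⟪toEuclideanLin A x, x⟫ := by
  rw [inner_toEuclideanLin_eq_sum A hA, inner_self_eq_sum_sq hA.eigenvectorBasis,
    Finset.mul_sum]
  apply Finset.sum_le_sum
  intro i _
  by_cases hi : i ∈ Finset.univ.filter (fun i => μ ≤ hA.eigenvalues i)
  · have := (Finset.mem_filter.mp hi).2
    exact mul_le_mul_of_nonneg_right this (sq_nonneg _)
  · rw [repr_zero_of_span _ _ _ hx i hi]
    simp

lemma rayleigh_lt (A : Matrix n n ℝ) (hA : A.IsHermitian) (μ : ℝ) (x : EuclideanSpace ℝ n)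
    (hx : x ∈ Submodule.span ℝ
      (hA.eigenvectorBasis '' ↑(Finset.univ.filter (fun i => hA.eigenvalues i < μ))))
    (hx0 : x ≠ 0) :
    ⟪toEuclideanLin A x, x⟫ < μ * ⟪x, x⟫ := by
  rw [inner_toEuclideanLin_eq_sum A hA, inner_self_eq_sum_sq hA.eigenvectorBasis,
    Finset.mul_sum]
  have hex : ∃ j, hA.eigenvectorBasis.repr x j ≠ 0 := by
    by_contra h
    push_neg at h
    apply hx0
    have : hA.eigenvectorBasis.repr x = 0 := by
      ext j; exact h j
    simpa using congrArg hA.eigenvectorBasis.repr.symm this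
  obtain ⟨j, hj⟩ := hex
  have hjQ : j ∈ Finset.univ.filter (fun i => hA.eigenvalues i < μ) := by
    by_contra h
    exact hj (repr_zero_of_span _ _ _ hx j h)
  apply Finset.sum_lt_sum
  · intro i _
    by_cases hi : i ∈ Finset.univ.filter (fun i => hA.eigenvalues i < μ)
    · exact mul_le_mul_of_nonneg_right (le_of_lt (Finset.mem_filter.mp hi).2) (sq_nonneg _)
    · rw [repr_zero_of_span _ _ _ hx i hi]; simp
  · refine ⟨j, Finset.mem_univ j, ?_⟩
    have h1 : hA.eigenvalues j < μ := (Finset.mem_filter.mp hjQ).2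
    have h2 : (0:ℝ) < (hA.eigenvectorBasis.repr x j) ^ 2 := by positivity
    exact mul_lt_mul_of_pos_right h1 h2

lemma card_filter_map {α : Type*} [Fintype α] (f : α → ℝ) (μ : ℝ) :
    Multiset.card ((Multiset.map f Finset.univ.val).filter (fun x => μ ≤ x))
      = (Finset.univ.filter (fun a => μ ≤ f a)).card := by
  rw [← Multiset.countP_eq_card_filter, Multiset.countP_map,
    Finset.card_def, Finset.filter_val]

lemma key {I J : Type*} [Fintype I] [DecidableEq I] [Fintype J] [DecidableEq J]
    (A : Matrix J J ℝ) (hA : A.IsHermitian) (Mm : Matrix I I ℝ) (hMm : Mm.IsHermitian)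
    (B : Matrix J I ℝ) (hBtB : Bᵀ * B = 1) (hBAB : Bᵀ * A * B = Mm)
    (k : ℕ) (hk1 : 1 ≤ k) (hk2 : k ≤ Fintype.card I) (hIJ : Fintype.card I ≤ Fintype.card J) :
    kdesc Mm.charpoly.roots k ≤ kdesc A.charpoly.roots k := by
  by_contra hcon
  push_neg at hcon
  set μ := kdesc Mm.charpoly.roots k with hμdef
  have hsM : Mm.charpoly.roots = Multiset.map hMm.eigenvalues Finset.univ.val :=
    specM_eq _ hMm
  have hsA : A.charpoly.roots = Multiset.map hA.eigenvalues Finset.univ.val :=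
    specM_eq _ hA
  have hcardM : Multiset.card Mm.charpoly.roots = Fintype.card I := by
    rw [hsM]; simp [Finset.card_univ]
  have hcardA : Multiset.card A.charpoly.roots = Fintype.card J := by
    rw [hsA]; simp [Finset.card_univ]
  -- lower bound on the number of large eigenvalues of Mm
  have hP : k ≤ (Finset.univ.filter (fun i : I => μ ≤ hMm.eigenvalues i)).card := by
    have h := count_ge_kdesc (Multiset.map hMm.eigenvalues Finset.univ.val) k hk1
      (by rw [← hsM, hcardM]; exact hk2) μ (by rw [hμdef, hsM])
    rwa [card_filter_map] at h
  -- upper bound on the number of large eigenvalues of A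
  have hQ : (Finset.univ.filter (fun j : J => μ ≤ hA.eigenvalues j)).card ≤ k - 1 := by
    have h := count_le_kdesc (Multiset.map hA.eigenvalues Finset.univ.val) k hk1
      (by rw [← hsA, hcardA]; omega) μ (by rw [← hsA]; exact hcon)
    rwa [card_filter_map] at h
  have hsplit := Finset.card_filter_add_card_filter_not
    (s := (Finset.univ : Finset J)) (p := fun j => μ ≤ hA.eigenvalues j)
  have hnegeq : (Finset.univ.filter (fun j : J => ¬ μ ≤ hA.eigenvalues j))
      = Finset.univ.filter (fun j : J => hA.eigenvalues j < μ) := by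
    apply Finset.filter_congr
    intro j _
    simp [not_le]
  rw [hnegeq, Finset.card_univ] at hsplit
  have hQ' : Fintype.card J - (k - 1)
      ≤ (Finset.univ.filter (fun j : J => hA.eigenvalues j < μ)).card := by omega
  -- subspaces
  set bM := hMm.eigenvectorBasis with hbM
  set bA := hA.eigenvectorBasis with hbA
  set W := Submodule.span ℝ
    (bM '' ↑(Finset.univ.filter (fun i : I => μ ≤ hMm.eigenvalues i))) with hW
  set U := Submodule.span ℝ
    (bA '' ↑(Finset.univ.filter (fun j : J => hA.eigenvalues j < μ))) with hU
  set L := Matrix.toEuclideanLin B with hL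
  have e : ∀ z, Matrix.toEuclideanLin Bᵀ (L z) = z := by
    intro z
    rw [hL, ← toEuclideanLin_mul, hBtB, toEuclideanLin_one]
  have hLinj : Function.Injective L := by
    intro x y hxy
    rw [← e x, ← e y, hxy]
  have hfW : finrank ℝ (W.map L) = (Finset.univ.filter
      (fun i : I => μ ≤ hMm.eigenvalues i)).card := by
    rw [← (Submodule.equivMapOfInjective L hLinj W).finrank_eq, hW, finrank_span_b]
  have hfU : finrank ℝ U = (Finset.univ.filter
      (fun j : J => hA.eigenvalues j < μ)).card := by
    rw [hU, finrank_span_b]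
  have hsum := Submodule.finrank_sup_add_finrank_inf_eq (W.map L) U
  have hle : finrank ℝ ((W.map L) ⊔ U : Submodule ℝ (EuclideanSpace ℝ J))
      ≤ Fintype.card J := by
    have := Submodule.finrank_le ((W.map L) ⊔ U : Submodule ℝ (EuclideanSpace ℝ J))
    rwa [finrank_euclideanSpace] at this
  have hinf : 1 ≤ finrank ℝ ((W.map L) ⊓ U : Submodule ℝ (EuclideanSpace ℝ J)) := by omega
  have hnebot : ((W.map L) ⊓ U : Submodule ℝ (EuclideanSpace ℝ J)) ≠ ⊥ := by
    intro h
    rw [h, finrank_bot] at hinf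
    omega
  obtain ⟨x, hxmem, hx0⟩ := Submodule.ne_bot_iff _ |>.mp hnebot
  obtain ⟨hxW, hxU⟩ := Submodule.mem_inf.mp hxmem
  obtain ⟨w, hwW, rfl⟩ := Submodule.mem_map.mp hxW
  have hinner1 : (inner ℝ (L w) (L w) : ℝ) = inner ℝ w w := by
    rw [hL]
    rw [show (Matrix.toEuclideanLin B) w = Matrix.toEuclideanLin B w from rfl]
    rw [inner_te B w (Matrix.toEuclideanLin B w)]
    rw [show Matrix.toEuclideanLin Bᵀ (Matrix.toEuclideanLin B w) = w from e w]
  have e2 : Matrix.toEuclideanLin Bᵀ (Matrix.toEuclideanLin A (L w))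
      = Matrix.toEuclideanLin Mm w := by
    rw [hL, ← toEuclideanLin_mul, ← toEuclideanLin_mul, hBAB]
  have hinner2 : (inner ℝ (Matrix.toEuclideanLin A (L w)) (L w) : ℝ)
      = inner ℝ (Matrix.toEuclideanLin Mm w) w := by
    rw [real_inner_comm, hL, inner_te B w, ← hL, e2, real_inner_comm]
  have c1 : μ * (inner ℝ (L w) (L w) : ℝ) ≤ inner ℝ (Matrix.toEuclideanLin A (L w)) (L w) := by
    rw [hinner1, hinner2]
    exact rayleigh_ge Mm hMm μ w hwW
  have c2 : (inner ℝ (Matrix.toEuclideanLin A (L w)) (L w) : ℝ)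
      < μ * (inner ℝ (L w) (L w) : ℝ) :=
    rayleigh_lt A hA μ (L w) hxU hx0
  exact absurd c1 (not_le.mpr c2)


lemma sum_subtype_ite {I : Type*} [Fintype I] [DecidableEq I] {t : Finset I}
    (f : {x // x ∈ t} → ℝ) (σ : I) :
    (∑ ρ : {x // x ∈ t}, if ρ.1 = σ then f ρ else 0)
      = if h : σ ∈ t then f ⟨σ, h⟩ else 0 := by
  by_cases h : σ ∈ t
  · rw [dif_pos h, Finset.sum_eq_single (⟨σ, h⟩ : {x // x ∈ t})]
    · rw [if_pos rfl]
    · intro ρ _ hρ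
      rw [if_neg]
      intro he
      exact hρ (Subtype.ext he)
    · intro habs
      exact absurd (Finset.mem_univ _) habs
  · rw [dif_neg h]
    apply Finset.sum_eq_zero
    intro ρ _
    rw [if_neg]
    intro he
    exact h (he ▸ ρ.2)

end AuxGarland

/-- Lemma: local-to-global principle, upper bound.
If `M_i` are symmetric matrices indexed by subsets `I_i ⊆ I`, `s_i : I_i → ℝ` satisfy
`∑_{i : σ ∈ I_i} s_i(σ)² = 1` for every `σ ∈ I`, and
`M_{σ,τ} = ∑_{i : σ,τ ∈ I_i} s_i(σ) s_i(τ) (M_i)_{σ,τ}`, then for every `1 ≤ k ≤ |I|`,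
the `k`-th largest eigenvalue of `M` is at most that of `⊕_i M_i`. -/
theorem abstract_garland_upper {I : Type*} [Fintype I] [DecidableEq I] {m : ℕ}
    (Is : Fin m → Finset I)
    (Mb : ∀ i : Fin m, Matrix {x : I // x ∈ Is i} {x : I // x ∈ Is i} ℝ)
    (hsym : ∀ i : Fin m, (Mb i).IsSymm)
    (s : ∀ i : Fin m, {x : I // x ∈ Is i} → ℝ)
    (hs : ∀ σ : I, (∑ i : Fin m, if h : σ ∈ Is i then (s i ⟨σ, h⟩) ^ 2 else 0) = 1)
    (M : Matrix I I ℝ)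
    (hM : ∀ σ τ : I, M σ τ = ∑ i : Fin m,
      if h : σ ∈ Is i ∧ τ ∈ Is i then
        s i ⟨σ, h.1⟩ * s i ⟨τ, h.2⟩ * Mb i ⟨σ, h.1⟩ ⟨τ, h.2⟩
      else 0)
    (k : ℕ) (hk1 : 1 ≤ k) (hk2 : k ≤ Fintype.card I) :
    eigDesc M k ≤ eigDesc (Matrix.blockDiagonal' Mb) k := by
  classical
  have hAH : (Matrix.blockDiagonal' Mb).IsHermitian := by
    rw [Matrix.IsHermitian, Matrix.blockDiagonal'_conjTranspose]
    have he : (fun i => (Mb i)ᴴ) = Mb := funext fun i => by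
      rw [conjTranspose_eq_transpose_of_trivial]
      exact hsym i
    rw [he]
  have hMH : M.IsHermitian := by
    rw [Matrix.IsHermitian]
    ext σ τ
    rw [Matrix.conjTranspose_apply, star_trivial, hM σ τ, hM τ σ]
    apply Finset.sum_congr rfl
    intro i _
    by_cases h : σ ∈ Is i ∧ τ ∈ Is i
    · rw [dif_pos ⟨h.2, h.1⟩, dif_pos h, (hsym i).apply]
      ring
    · rw [dif_neg (fun hc => h ⟨hc.2, hc.1⟩), dif_neg h]
  set Bm : Matrix ((i : Fin m) × {x : I // x ∈ Is i}) I ℝ :=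
    Matrix.of (fun p τ => if p.2.1 = τ then s p.1 p.2 else 0) with hBm
  have hBmApp : ∀ (i : Fin m) (ρ : {x : I // x ∈ Is i}) (τ : I),
      Bm ⟨i, ρ⟩ τ = if ρ.1 = τ then s i ρ else 0 := fun _ _ _ => rfl
  have hBtB : Bmᵀ * Bm = 1 := by
    ext σ τ
    rw [Matrix.mul_apply]
    simp only [Matrix.transpose_apply]
    rw [← Finset.univ_sigma_univ, Finset.sum_sigma]
    have hterm : ∀ i : Fin m, (∑ ρ : {x : I // x ∈ Is i}, Bm ⟨i, ρ⟩ σ * Bm ⟨i, ρ⟩ τ)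
        = if h : σ ∈ Is i then (if σ = τ then s i ⟨σ, h⟩ * s i ⟨σ, h⟩ else 0) else 0 := by
      intro i
      rw [← sum_subtype_ite (t := Is i) (fun ρ => if σ = τ then s i ρ * s i ρ else 0) σ]
      apply Finset.sum_congr rfl
      intro ρ _
      rw [hBmApp, hBmApp]
      by_cases h1 : ρ.1 = σ
      · by_cases h2 : σ = τ
        · subst h2
          simp [h1]
        · have h3 : ρ.1 ≠ τ := fun hc => h2 (h1.symm.trans hc)
          simp [h1, h2, h3]
      · simp [h1]
    rw [Finset.sum_congr rfl (fun i _ => hterm i)]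
    by_cases hστ : σ = τ
    · subst hστ
      rw [Matrix.one_apply_eq, ← hs σ]
      apply Finset.sum_congr rfl
      intro i _
      by_cases h : σ ∈ Is i
      · rw [dif_pos h, dif_pos h, if_pos rfl, sq]
      · rw [dif_neg h, dif_neg h]
    · rw [Matrix.one_apply_ne hστ]
      apply Finset.sum_eq_zero
      intro i _
      by_cases h : σ ∈ Is i
      · rw [dif_pos h, if_neg hστ]
      · rw [dif_neg h]
  have hBAB : Bmᵀ * Matrix.blockDiagonal' Mb * Bm = M := by
    ext σ τ
    rw [hM σ τ, Matrix.mul_apply]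
    rw [← Finset.univ_sigma_univ, Finset.sum_sigma]
    apply Finset.sum_congr rfl
    intro i _
    have hBA : ∀ ρ' : {x : I // x ∈ Is i}, (Bmᵀ * Matrix.blockDiagonal' Mb) σ ⟨i, ρ'⟩
        = if h : σ ∈ Is i then s i ⟨σ, h⟩ * Mb i ⟨σ, h⟩ ρ' else 0 := by
      intro ρ'
      rw [Matrix.mul_apply, ← Finset.univ_sigma_univ, Finset.sum_sigma]
      rw [Finset.sum_eq_single i]
      · rw [← sum_subtype_ite (t := Is i) (fun ρ => s i ρ * Mb i ρ ρ') σ]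
        apply Finset.sum_congr rfl
        intro ρ _
        rw [Matrix.transpose_apply, hBmApp, Matrix.blockDiagonal'_apply_eq]
        by_cases h1 : ρ.1 = σ
        · rw [if_pos h1, if_pos h1]
        · rw [if_neg h1, if_neg h1, zero_mul]
      · intro i' _ hne
        apply Finset.sum_eq_zero
        intro ρ _
        rw [Matrix.blockDiagonal'_apply_ne _ _ _ hne, mul_zero]
      · intro habs
        exact absurd (Finset.mem_univ _) habs
    rw [Finset.sum_congr rfl (fun ρ' _ => by rw [hBA ρ'])]
    have := sum_subtype_ite (t := Is i)
      (fun ρ' => (if h : σ ∈ Is i then s i ⟨σ, h⟩ * Mb i ⟨σ, h⟩ ρ' else 0) * s i ρ') τ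
    rw [show (∑ ρ' : {x : I // x ∈ Is i},
        (if h : σ ∈ Is i then s i ⟨σ, h⟩ * Mb i ⟨σ, h⟩ ρ' else 0) * Bm ⟨i, ρ'⟩ τ)
        = ∑ ρ' : {x : I // x ∈ Is i}, (if ρ'.1 = τ then
            (if h : σ ∈ Is i then s i ⟨σ, h⟩ * Mb i ⟨σ, h⟩ ρ' else 0) * s i ρ' else 0) from by
      apply Finset.sum_congr rfl
      intro ρ' _
      rw [hBmApp]
      by_cases h1 : ρ'.1 = τ
      · rw [if_pos h1, if_pos h1]
      · rw [if_neg h1, if_neg h1, mul_zero]]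
    rw [this]
    by_cases hτ : τ ∈ Is i
    · rw [dif_pos hτ]
      by_cases hσ : σ ∈ Is i
      · rw [dif_pos hσ, dif_pos ⟨hσ, hτ⟩]
        ring
      · rw [dif_neg hσ, dif_neg (fun hc => hσ hc.1), zero_mul]
    · rw [dif_neg hτ, dif_neg (fun hc => hτ hc.2)]
  have hIJ : Fintype.card I ≤ Fintype.card ((i : Fin m) × {x : I // x ∈ Is i}) := by
    have hex : ∀ σ : I, ∃ i, σ ∈ Is i := by
      intro σ
      by_contra h
      push_neg at h
      have h1 := hs σ
      rw [Finset.sum_eq_zero (fun i _ => dif_neg (h i))] at h1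
      exact zero_ne_one h1
    choose f hf using hex
    exact Fintype.card_le_of_injective (fun σ => ⟨f σ, ⟨σ, hf σ⟩⟩)
      (fun a b hab => congrArg (fun p : (i : Fin m) × {x : I // x ∈ Is i} => p.2.1) hab)
  exact key (Matrix.blockDiagonal' Mb) hAH M hMH Bm hBtB hBAB k hk1 hk2 hIJ


end Garland
end

section
/- Let X be a simplicial complex, let w : X → ℝ_{>0} be a weight function, and let 0 ≤ ℓ < k ≤ dim(X). Then for all σ, τ ∈ X(k): ∑_{η ∈ X(ℓ) : η ⊆ σ and η ⊆ τ} s_η(σ) s_η(τ) · (k+1) · L̂_η^+_{σ,τ} = (k−ℓ)·L̂_k^+(X;w)_{σ,τ} + (ℓ+1)·R_k(X;w)_{σ,τ}, where L̂_η^+ denotes the symmetric weighted upper Laplacian of lk(X,η) in dimension k−ℓ−1 reindexed by the bijection σ ↦ σ∖η between {σ ∈ X(k) : η ⊆ σ} and lk(X,η)(k−ℓ−1). -/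
open Matrix BigOperators

namespace Garland

variable {V : Type*}

set_option linter.unusedSectionVars false
section Lemmas
variable {V : Type*} [LinearOrder V]

lemma symLapUp_apply (Y : Finset (Finset V)) (w : Finset V → ℝ) (m : ℕ)
    (hw : ∀ σ ∈ facesC Y (m + 1), 0 < w σ)
    (a b : {σ : Finset V // σ ∈ facesC Y (m + 1)}) :
    symLapUp Y w m a b = (Real.sqrt (w a.1))⁻¹ * (Real.sqrt (w b.1))⁻¹ *
      ∑ ρ ∈ facesC Y (m + 2),
        (if a.1 ⊆ ρ ∧ b.1 ⊆ ρ then incSign ρ a.1 * incSign ρ b.1 * w ρ else 0) := by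
  classical
  have hD : (WmatSqrt Y w (m+1))⁻¹ =
      Matrix.diagonal (fun σ : {σ : Finset V // σ ∈ facesC Y (m+1)} =>
        (Real.sqrt (w σ.1))⁻¹) := by
    apply Matrix.inv_eq_right_inv
    rw [WmatSqrt, Matrix.diagonal_mul_diagonal]
    convert Matrix.diagonal_one
    next σ =>
      exact mul_inv_cancel₀ (ne_of_gt (Real.sqrt_pos.mpr (hw σ.1 σ.2)))
  rw [symLapUp, hD, Wmat]
  rw [Matrix.mul_diagonal, Matrix.mul_apply]
  have : ∀ ρ : {σ : Finset V // σ ∈ facesC Y (m + 2)},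
      ((Matrix.diagonal fun σ : {σ : Finset V // σ ∈ facesC Y (m+1)} => (Real.sqrt (w σ.1))⁻¹) *
        bdry Y (m + 1) * Matrix.diagonal (fun σ : {σ : Finset V // σ ∈ facesC Y (m+2)} => w σ.1)) a ρ *
        (bdry Y (m + 1))ᵀ ρ b =
      (Real.sqrt (w a.1))⁻¹ *
        (if a.1 ⊆ ρ.1 ∧ b.1 ⊆ ρ.1 then incSign ρ.1 a.1 * incSign ρ.1 b.1 * w ρ.1 else 0) := by
    intro ρ
    rw [Matrix.mul_diagonal, Matrix.diagonal_mul, Matrix.transpose_apply, bdry]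
    by_cases h1 : a.1 ⊆ ρ.1 <;> by_cases h2 : b.1 ⊆ ρ.1 <;>
      simp [h1, h2] <;> ring
  rw [Finset.sum_congr rfl (fun ρ _ => this ρ), ← Finset.mul_sum]
  rw [← Finset.sum_coe_sort (facesC Y (m + 2))
    (fun ρ => if a.1 ⊆ ρ ∧ b.1 ⊆ ρ then incSign ρ a.1 * incSign ρ b.1 * w ρ else 0)]
  ring

end Lemmas
set_option linter.unusedSectionVars false
section Lemmas2
variable {V : Type*} [LinearOrder V]

lemma incSign_singleton {ρ σ : Finset V} {u : V} (h : ρ \ σ = {u}) :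
    incSign ρ σ = (-1 : ℝ) ^ (ρ.filter fun v => v < u).card := by
  rw [incSign, h, Finset.sum_singleton]

lemma sdiff_sdiff_of_subset {η σ ρ : Finset V} (hησ : η ⊆ σ) :
    (ρ \ η) \ (σ \ η) = ρ \ σ := by
  ext x
  simp only [Finset.mem_sdiff]
  constructor
  · rintro ⟨⟨hxρ, hxη⟩, h⟩
    exact ⟨hxρ, fun hxσ => h ⟨hxσ, hxη⟩⟩
  · rintro ⟨hxρ, hxσ⟩
    exact ⟨⟨hxρ, fun hxη => hxσ (hησ hxη)⟩, fun h => hxσ h.1⟩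

lemma filter_card_sdiff {η ρ : Finset V} (hηρ : η ⊆ ρ) (p : V → Prop) [DecidablePred p] :
    (ρ.filter p).card = ((ρ \ η).filter p).card + (η.filter p).card := by
  rw [← Finset.card_union_of_disjoint, ← Finset.filter_union,
    Finset.sdiff_union_of_subset hηρ]
  exact Finset.disjoint_filter_filter Finset.sdiff_disjoint

/-- `incSign (ρ\η) (σ\η)` in terms of `incSign ρ σ`. -/
lemma incSign_sdiff {η σ ρ : Finset V} {u : V} (hησ : η ⊆ σ) (hσρ : σ ⊆ ρ)
    (h : ρ \ σ = {u}) :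
    incSign (ρ \ η) (σ \ η) =
      incSign ρ σ * (-1 : ℝ) ^ (η.filter fun v => v < u).card := by
  rw [incSign_singleton h, incSign_singleton (by rw [sdiff_sdiff_of_subset hησ, h]),
    filter_card_sdiff (hησ.trans hσρ) (fun v => v < u), pow_add]
  rw [mul_assoc, ← pow_add, ← two_mul, pow_mul]
  norm_num

lemma incSign_mul_self {σ ρ : Finset V} {u : V} (h : ρ \ σ = {u}) :
    incSign ρ σ * incSign ρ σ = 1 := by
  rw [incSign_singleton h, ← pow_add, ← two_mul, pow_mul]
  norm_num

/-- The crossing number as a sum. -/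
lemma crossing_card (η s : Finset V) :
    ((s ×ˢ η).filter fun p => p.2 < p.1).card =
      ∑ i ∈ s, (η.filter fun v => v < i).card := by
  classical
  rw [Finset.card_filter, Finset.sum_product]
  refine Finset.sum_congr rfl fun i _ => ?_
  rw [Finset.card_filter]

end Lemmas2
section Lemmas3
variable {V : Type*} [LinearOrder V]

lemma sign_eta {η σ τ ρ : Finset V} {u v : V}
    (hησ : η ⊆ σ) (hητ : η ⊆ τ) (hσρ : σ ⊆ ρ) (hτρ : τ ⊆ ρ)
    (hu : ρ \ σ = {u}) (hv : ρ \ τ = {v}) :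
    (-1 : ℝ) ^ (((σ \ η) ×ˢ η).filter fun p => p.2 < p.1).card *
      (-1 : ℝ) ^ (((τ \ η) ×ˢ η).filter fun p => p.2 < p.1).card *
      (incSign (ρ \ η) (σ \ η) * incSign (ρ \ η) (τ \ η)) =
    incSign ρ σ * incSign ρ τ := by
  classical
  rw [incSign_sdiff hησ hσρ hu, incSign_sdiff hητ hτρ hv, crossing_card, crossing_card]
  have key : ∀ (s : Finset V) (x : V), s ⊆ ρ → η ⊆ s → ρ \ s = {x} →
      ∑ i ∈ ρ \ η, (η.filter fun w => w < i).card
        = (η.filter fun w => w < x).card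
          + ∑ i ∈ s \ η, (η.filter fun w => w < i).card := by
    intro s x hsρ hηs hx
    have hxmem : x ∈ ρ \ s := by rw [hx]; exact Finset.mem_singleton_self x
    have hxρ : x ∈ ρ := (Finset.mem_sdiff.mp hxmem).1
    have hxs : x ∉ s := (Finset.mem_sdiff.mp hxmem).2
    have hset : ρ \ η = insert x (s \ η) := by
      ext y
      simp only [Finset.mem_sdiff, Finset.mem_insert]
      constructor
      · rintro ⟨hyρ, hyη⟩
        by_cases hys : y ∈ s
        · exact Or.inr ⟨hys, hyη⟩
        · exact Or.inl (Finset.mem_singleton.mp (hx ▸ Finset.mem_sdiff.mpr ⟨hyρ, hys⟩))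
      · rintro (rfl | ⟨hys, hyη⟩)
        · exact ⟨hxρ, fun h => hxs (hηs h)⟩
        · exact ⟨hsρ hys, hyη⟩
    rw [hset, Finset.sum_insert (fun h => hxs (Finset.mem_sdiff.mp h).1)]
  have h1 := key σ u hσρ hησ hu
  have h2 := key τ v hτρ hητ hv
  set aσ := ∑ i ∈ σ \ η, (η.filter fun w => w < i).card with haσ
  set aτ := ∑ i ∈ τ \ η, (η.filter fun w => w < i).card with haτ
  set A := (η.filter fun w => w < u).card with hA
  set B := (η.filter fun w => w < v).card with hB
  set T := ∑ i ∈ ρ \ η, (η.filter fun w => w < i).card with hT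
  have h2T : aσ + aτ + (A + B) = 2 * T := by omega
  have hone : (-1 : ℝ) ^ aσ * (-1) ^ aτ * ((-1) ^ A * (-1) ^ B) = 1 := by
    rw [← pow_add, ← pow_add, ← pow_add, h2T, pow_mul]
    norm_num
  calc (-1 : ℝ) ^ aσ * (-1) ^ aτ *
        (incSign ρ σ * (-1) ^ A * (incSign ρ τ * (-1) ^ B))
      = incSign ρ σ * incSign ρ τ *
          ((-1 : ℝ) ^ aσ * (-1) ^ aτ * ((-1) ^ A * (-1) ^ B)) := by ring
    _ = incSign ρ σ * incSign ρ τ := by rw [hone, mul_one]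

end Lemmas3
section Lemmas4
variable {V : Type*} [LinearOrder V]

lemma key_sum {σ τ ρ : Finset V} {k ℓ : ℕ} (hlk : ℓ < k)
    (hσ : σ.card = k + 1) (hτ : τ.card = k + 1) (hρ : ρ.card = k + 2)
    (hσρ : σ ⊆ ρ) (hτρ : τ ⊆ ρ) :
    ∑ η ∈ Finset.powersetCard (ℓ + 1) (σ ∩ τ),
      sCoef ℓ η σ * sCoef ℓ η τ * ((k : ℝ) + 1) *
        (incSign (ρ \ η) (σ \ η) * incSign (ρ \ η) (τ \ η)) =
    ((k : ℝ) - ℓ) * (incSign ρ σ * incSign ρ τ) +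
      ((ℓ : ℝ) + 1) * (if σ = τ then 1 else 0) := by
  classical
  obtain ⟨u, hu⟩ := Finset.card_eq_one.mp (show (ρ \ σ).card = 1 by
    rw [Finset.card_sdiff_of_subset hσρ, hρ, hσ]; omega)
  obtain ⟨v, hv⟩ := Finset.card_eq_one.mp (show (ρ \ τ).card = 1 by
    rw [Finset.card_sdiff_of_subset hτρ, hρ, hτ]; omega)
  have hC0 : (0 : ℝ) < (((k+1).choose (ℓ+1) : ℕ) : ℝ) := by
    exact_mod_cast Nat.choose_pos (by omega : ℓ + 1 ≤ k + 1)
  have hsq : (Real.sqrt (((k+1).choose (ℓ+1) : ℕ) : ℝ))⁻¹ *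
      (Real.sqrt (((k+1).choose (ℓ+1) : ℕ) : ℝ))⁻¹ =
      ((((k+1).choose (ℓ+1) : ℕ) : ℝ))⁻¹ := by
    rw [← mul_inv, Real.mul_self_sqrt hC0.le]
  have hterm : ∀ η ∈ Finset.powersetCard (ℓ + 1) (σ ∩ τ),
      sCoef ℓ η σ * sCoef ℓ η τ * ((k : ℝ) + 1) *
        (incSign (ρ \ η) (σ \ η) * incSign (ρ \ η) (τ \ η)) =
      ((((k+1).choose (ℓ+1) : ℕ) : ℝ))⁻¹ * ((k : ℝ) + 1) *
        (incSign ρ σ * incSign ρ τ) := by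
    intro η hη
    obtain ⟨hηsub, -⟩ := Finset.mem_powersetCard.mp hη
    have hησ : η ⊆ σ := hηsub.trans Finset.inter_subset_left
    have hητ : η ⊆ τ := hηsub.trans Finset.inter_subset_right
    rw [sCoef, sCoef, hσ, hτ, ← sign_eta hησ hητ hσρ hτρ hu hv, ← hsq]
    ring
  rw [Finset.sum_congr rfl hterm, Finset.sum_const, Finset.card_powersetCard,
    nsmul_eq_mul]
  by_cases hστ : σ = τ
  · subst hστ
    rw [if_pos rfl, Finset.inter_self, hσ, incSign_mul_self hu]
    field_simp
    ring
  · rw [if_neg hστ]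
    have hcap : (σ ∩ τ).card = k := by
      have hsub : σ ∪ τ ⊆ ρ := Finset.union_subset hσρ hτρ
      have h1 : (σ ∪ τ).card ≤ k + 2 := by rw [← hρ]; exact Finset.card_le_card hsub
      have h2 : σ.card ≤ (σ ∪ τ).card := Finset.card_le_card Finset.subset_union_left
      have h3 : (σ ∪ τ).card ≠ k + 1 := by
        intro h
        apply hστ
        have hσu : σ ∪ τ = σ :=
          (Finset.eq_of_subset_of_card_le Finset.subset_union_left (by omega)).symm
        have hτσ : τ ⊆ σ := hσu ▸ Finset.subset_union_right
        exact (Finset.eq_of_subset_of_card_le hτσ (by omega)).symm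
      have h4 := Finset.card_inter_add_card_union σ τ
      omega
    rw [hcap]
    have hnat : (k + 1) * k.choose (ℓ+1) = (k - ℓ) * (k+1).choose (ℓ+1) := by
      have hrec : (k+1).choose (ℓ+1) = k.choose ℓ + k.choose (ℓ+1) :=
        Nat.choose_succ_succ k ℓ
      have hsr : k.choose (ℓ+1) * (ℓ+1) = k.choose ℓ * (k - ℓ) :=
        Nat.choose_succ_right_eq k ℓ
      have h5 : ℓ + 1 + (k - ℓ) = k + 1 := by omega
      calc (k+1) * k.choose (ℓ+1) = (ℓ+1+(k-ℓ)) * k.choose (ℓ+1) := by rw [h5]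
        _ = k.choose (ℓ+1) * (ℓ+1) + (k-ℓ) * k.choose (ℓ+1) := by ring
        _ = k.choose ℓ * (k-ℓ) + (k-ℓ) * k.choose (ℓ+1) := by rw [hsr]
        _ = (k-ℓ) * (k.choose ℓ + k.choose (ℓ+1)) := by ring
        _ = (k-ℓ) * (k+1).choose (ℓ+1) := by rw [← hrec]
    have hcast : ((k:ℝ) + 1) * ((k.choose (ℓ+1) : ℕ) : ℝ) =
        ((k:ℝ) - ℓ) * (((k+1).choose (ℓ+1) : ℕ) : ℝ) := by
      have hc := congrArg (Nat.cast : ℕ → ℝ) hnat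
      push_cast [Nat.cast_sub hlk.le] at hc
      linarith
    field_simp
    linear_combination (incSign ρ σ * incSign ρ τ) * hcast
end Lemmas4
section Lemmas5
variable {V : Type*} [LinearOrder V]

lemma mem_facesC {X : Finset (Finset V)} {n : ℕ} {σ : Finset V} :
    σ ∈ facesC X n ↔ σ ∈ X ∧ σ.card = n := by
  simp [facesC]

lemma mem_link {X : Finset (Finset V)} {η τ : Finset V} :
    τ ∈ link X η ↔ τ ∈ X ∧ τ ∩ η = ∅ ∧ τ ∪ η ∈ X := by
  simp [link, and_assoc]

lemma link_inner {X : Finset (Finset V)} (hX : IsComplex X) (w : Finset V → ℝ)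
    {k ℓ : ℕ} {σ τ η : Finset V}
    (hσX : σ ∈ X) (hσc : σ.card = k + 1) (hτX : τ ∈ X) (hτc : τ.card = k + 1)
    (hησ : η ⊆ σ) (hητ : η ⊆ τ) (hηc : η.card = ℓ + 1) (hlk : ℓ < k) :
    ∑ ρ' ∈ facesC (link X η) (k - ℓ + 1),
      (if σ \ η ⊆ ρ' ∧ τ \ η ⊆ ρ' then
        incSign ρ' (σ \ η) * incSign ρ' (τ \ η) * w (ρ' ∪ η) else 0)
    = ∑ ρ ∈ facesC X (k + 2),
      (if σ ⊆ ρ ∧ τ ⊆ ρ then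
        incSign (ρ \ η) (σ \ η) * incSign (ρ \ η) (τ \ η) * w ρ else 0) := by
  classical
  rw [← Finset.sum_filter, ← Finset.sum_filter]
  refine Finset.sum_nbij' (fun ρ' => ρ' ∪ η) (fun ρ => ρ \ η) ?_ ?_ ?_ ?_ ?_
  · intro ρ' h
    obtain ⟨h1, hsub1, hsub2⟩ := Finset.mem_filter.mp h
    obtain ⟨hmem, hcard⟩ := mem_facesC.mp h1
    obtain ⟨hρX, hdis, hρη⟩ := mem_link.mp hmem
    refine Finset.mem_filter.mpr ⟨mem_facesC.mpr ⟨hρη, ?_⟩, ?_, ?_⟩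
    · rw [Finset.card_union_of_disjoint (Finset.disjoint_iff_inter_eq_empty.mpr hdis),
        hcard, hηc]
      omega
    · calc σ = σ \ η ∪ η := (Finset.sdiff_union_of_subset hησ).symm
        _ ⊆ ρ' ∪ η := Finset.union_subset_union hsub1 (Finset.Subset.refl η)
    · calc τ = τ \ η ∪ η := (Finset.sdiff_union_of_subset hητ).symm
        _ ⊆ ρ' ∪ η := Finset.union_subset_union hsub2 (Finset.Subset.refl η)
  · intro ρ h
    obtain ⟨h1, hsub1, hsub2⟩ := Finset.mem_filter.mp h
    obtain ⟨hρX, hcard⟩ := mem_facesC.mp h1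
    have hηρ : η ⊆ ρ := hησ.trans hsub1
    refine Finset.mem_filter.mpr ⟨mem_facesC.mpr ⟨mem_link.mpr
      ⟨hX.2 ρ hρX _ Finset.sdiff_subset, Finset.sdiff_inter_self η ρ, ?_⟩, ?_⟩, ?_, ?_⟩
    · rwa [Finset.sdiff_union_of_subset hηρ]
    · rw [Finset.card_sdiff_of_subset hηρ, hcard, hηc]; omega
    · exact Finset.sdiff_subset_sdiff hsub1 (Finset.Subset.refl η)
    · exact Finset.sdiff_subset_sdiff hsub2 (Finset.Subset.refl η)
  · intro ρ' h
    obtain ⟨h1, -, -⟩ := Finset.mem_filter.mp h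
    obtain ⟨hmem, -⟩ := mem_facesC.mp h1
    obtain ⟨-, hdis, -⟩ := mem_link.mp hmem
    show (ρ' ∪ η) \ η = ρ'
    rw [Finset.union_sdiff_right]
    exact Finset.sdiff_eq_self_iff_disjoint.mpr
      (Finset.disjoint_iff_inter_eq_empty.mpr hdis)
  · intro ρ h
    obtain ⟨h1, hsub1, -⟩ := Finset.mem_filter.mp h
    show ρ \ η ∪ η = ρ
    exact Finset.sdiff_union_of_subset (hησ.trans hsub1)
  · intro ρ' h
    obtain ⟨h1, -, -⟩ := Finset.mem_filter.mp h
    obtain ⟨hmem, -⟩ := mem_facesC.mp h1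
    obtain ⟨-, hdis, -⟩ := mem_link.mp hmem
    have : (ρ' ∪ η) \ η = ρ' := by
      rw [Finset.union_sdiff_right]
      exact Finset.sdiff_eq_self_iff_disjoint.mpr
        (Finset.disjoint_iff_inter_eq_empty.mpr hdis)
    rw [this]

end Lemmas5
section Lemmas6
variable {V : Type*} [LinearOrder V]

lemma eta_term {X : Finset (Finset V)} (hX : IsComplex X)
    {w : Finset V → ℝ} (hw : ∀ σ ∈ X, 0 < w σ) {k ℓ : ℕ} (hlk : ℓ < k)
    {σ τ η : Finset V} (hσX : σ ∈ X) (hσc : σ.card = k + 1)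
    (hτX : τ ∈ X) (hτc : τ.card = k + 1)
    (hησ : η ⊆ σ) (hητ : η ⊆ τ) (hηc : η.card = ℓ + 1) :
    symLapUpE (link X η) (fun ρ => w (ρ ∪ η)) (k - ℓ - 1) (σ \ η) (τ \ η)
    = (Real.sqrt (w σ))⁻¹ * (Real.sqrt (w τ))⁻¹ *
        ∑ ρ ∈ facesC X (k + 2),
          (if σ ⊆ ρ ∧ τ ⊆ ρ then
            incSign (ρ \ η) (σ \ η) * incSign (ρ \ η) (τ \ η) * w ρ else 0) := by
  classical
  have hm2 : k - ℓ - 1 + 2 = k - ℓ + 1 := by omega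
  have hmemfun : ∀ s : Finset V, s ∈ X → s.card = k + 1 → η ⊆ s →
      s \ η ∈ facesC (link X η) (k - ℓ - 1 + 1) := by
    intro s hsX hsc hηs
    refine mem_facesC.mpr ⟨mem_link.mpr
      ⟨hX.2 s hsX _ Finset.sdiff_subset, Finset.sdiff_inter_self η s, ?_⟩, ?_⟩
    · rwa [Finset.sdiff_union_of_subset hηs]
    · rw [Finset.card_sdiff_of_subset hηs, hsc, hηc]; omega
  have hσmem := hmemfun σ hσX hσc hησ
  have hτmem := hmemfun τ hτX hτc hητ
  have hwl : ∀ ρ' ∈ facesC (link X η) (k - ℓ - 1 + 1), 0 < w (ρ' ∪ η) := by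
    intro ρ' h
    exact hw _ (mem_link.mp (mem_facesC.mp h).1).2.2
  rw [symLapUpE, dif_pos ⟨hσmem, hτmem⟩,
    symLapUp_apply (link X η) (fun ρ => w (ρ ∪ η)) (k - ℓ - 1) hwl ⟨_, hσmem⟩ ⟨_, hτmem⟩]
  simp only [Finset.sdiff_union_of_subset hησ, Finset.sdiff_union_of_subset hητ]
  congr 1
  rw [hm2]
  exact link_inner hX w hσX hσc hτX hτc hησ hητ hηc hlk

end Lemmas6

section Lemmas7
variable {V : Type*} [Fintype V] [LinearOrder V]

lemma wdeg_eq {X : Finset (Finset V)} {w : Finset V → ℝ}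
    {k : ℕ} {σ : Finset V} (hσX : σ ∈ X) (hσc : σ.card = k + 1) (hwσ : 0 < w σ) :
    wdeg X w σ = (Real.sqrt (w σ))⁻¹ * (Real.sqrt (w σ))⁻¹ *
      ∑ ρ ∈ facesC X (k + 2), (if σ ⊆ ρ then w ρ else 0) := by
  classical
  rw [wdeg]
  rw [← Finset.sum_filter]
  have hbij : ∑ v ∈ Finset.univ.filter (fun v => v ∉ σ ∧ insert v σ ∈ X),
      w (insert v σ) / w σ
      = ∑ ρ ∈ (facesC X (k+2)).filter (fun ρ => σ ⊆ ρ), w ρ / w σ := by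
    refine Finset.sum_bij (fun v _ => insert v σ) ?_ ?_ ?_ ?_
    · intro v hv
      obtain ⟨-, hv1, hv2⟩ := Finset.mem_filter.mp hv
      refine Finset.mem_filter.mpr ⟨mem_facesC.mpr ⟨hv2, ?_⟩, Finset.subset_insert _ _⟩
      rw [Finset.card_insert_of_notMem hv1, hσc]
    · intro a ha b hb h
      have ha' := (Finset.mem_filter.mp ha).2.1
      have h2 : insert a σ = insert b σ := h
      have : a ∈ insert b σ := h2 ▸ Finset.mem_insert_self a σ
      rcases Finset.mem_insert.mp this with h' | h'
      · exact h'
      · exact absurd h' ha'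
    · intro ρ hρ
      obtain ⟨hρf, hρs⟩ := Finset.mem_filter.mp hρ
      obtain ⟨hρX, hρc⟩ := mem_facesC.mp hρf
      have hcard : (ρ \ σ).card = 1 := by
        rw [Finset.card_sdiff_of_subset hρs, hρc, hσc]; omega
      obtain ⟨v, hv⟩ := Finset.card_eq_one.mp hcard
      have hvρ : v ∈ ρ \ σ := hv ▸ Finset.mem_singleton_self v
      have hvnσ : v ∉ σ := (Finset.mem_sdiff.mp hvρ).2
      have hins : insert v σ = ρ := by
        refine Finset.eq_of_subset_of_card_le
          (Finset.insert_subset (Finset.mem_sdiff.mp hvρ).1 hρs) ?_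
        rw [Finset.card_insert_of_notMem hvnσ, hσc, hρc]
      exact ⟨v, Finset.mem_filter.mpr ⟨Finset.mem_univ v, hvnσ, hins ▸ hρX⟩, hins⟩
    · intro v hv; rfl
  have hss : (Real.sqrt (w σ))⁻¹ * (Real.sqrt (w σ))⁻¹ = (w σ)⁻¹ := by
    rw [← mul_inv, Real.mul_self_sqrt hwσ.le]
  rw [hbij, ← Finset.sum_div, hss, div_eq_mul_inv]
  ring

end Lemmas7
/-- Proposition: upper Laplacian identity. For a simplicial complex `X`
with weight `w : X → ℝ_{>0}`, `0 ≤ ℓ < k ≤ dim X` and `σ, τ ∈ X(k)`: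
`∑_{η ∈ X(ℓ) : η ⊆ σ, η ⊆ τ} s_η(σ) s_η(τ) (k+1) (L̂_η^+)_{σ,τ}
  = (k−ℓ)·L̂_k^+(X;w)_{σ,τ} + (ℓ+1)·R_k(X;w)_{σ,τ}`,
where `(L̂_η^+)_{σ,τ}` is the `(σ∖η, τ∖η)` entry of the symmetric weighted upper Laplacian
of `lk(X,η)` in dimension `k−ℓ−1`, and `R_k(X;w)` is the diagonal matrix of weighted
degrees. -/
theorem upper_laplacian_identity {V : Type*} [Fintype V] [LinearOrder V]
    (X : Finset (Finset V)) (w : Finset V → ℝ)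
    (hX : IsComplex X) (hw : ∀ σ ∈ X, 0 < w σ)
    (ℓ k : ℕ) (hlk : ℓ < k) (hk : k ≤ dimX X)
    (σ τ : Finset V) (hσ : σ ∈ facesC X (k + 1)) (hτ : τ ∈ facesC X (k + 1)) :
    ∑ η ∈ (facesC X (ℓ + 1)).filter (fun η => η ⊆ σ ∧ η ⊆ τ),
      sCoef ℓ η σ * sCoef ℓ η τ * ((k : ℝ) + 1) *
        symLapUpE (link X η) (fun ρ => w (ρ ∪ η)) (k - ℓ - 1) (σ \ η) (τ \ η) =
      ((k : ℝ) - ℓ) * symLapUpE X w k σ τ +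
        ((ℓ : ℝ) + 1) * (if σ = τ then wdeg X w σ else 0) := by
  classical
  obtain ⟨hσX, hσc⟩ := mem_facesC.mp hσ
  obtain ⟨hτX, hτc⟩ := mem_facesC.mp hτ
  have hwσ := hw σ hσX
  have hwτ := hw τ hτX
  set A : ℝ := (Real.sqrt (w σ))⁻¹ * (Real.sqrt (w τ))⁻¹ with hA
  have hF : (facesC X (ℓ + 1)).filter (fun η => η ⊆ σ ∧ η ⊆ τ)
      = Finset.powersetCard (ℓ + 1) (σ ∩ τ) := by
    ext η
    simp only [Finset.mem_filter, mem_facesC, Finset.mem_powersetCard,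
      Finset.subset_inter_iff]
    constructor
    · rintro ⟨⟨h1, hc⟩, hs, ht⟩; exact ⟨⟨hs, ht⟩, hc⟩
    · rintro ⟨⟨hs, ht⟩, hc⟩; exact ⟨⟨hX.2 σ hσX η hs, hc⟩, hs, ht⟩
  have hstep : ∀ η ∈ (facesC X (ℓ+1)).filter (fun η => η ⊆ σ ∧ η ⊆ τ),
      sCoef ℓ η σ * sCoef ℓ η τ * ((k : ℝ) + 1) *
        symLapUpE (link X η) (fun ρ => w (ρ ∪ η)) (k - ℓ - 1) (σ \ η) (τ \ η)
      = A * ∑ ρ ∈ facesC X (k + 2),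
            (if σ ⊆ ρ ∧ τ ⊆ ρ then
              sCoef ℓ η σ * sCoef ℓ η τ * ((k : ℝ) + 1) *
                (incSign (ρ \ η) (σ \ η) * incSign (ρ \ η) (τ \ η)) * w ρ else 0) := by
    intro η hη
    obtain ⟨hηf, hησ, hητ⟩ := Finset.mem_filter.mp hη
    obtain ⟨hηX, hηc⟩ := mem_facesC.mp hηf
    rw [eta_term hX hw hlk hσX hσc hτX hτc hησ hητ hηc, hA,
      Finset.mul_sum, Finset.mul_sum, Finset.mul_sum]
    refine Finset.sum_congr rfl fun ρ _ => ?_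
    split_ifs with h
    · ring
    · simp
  rw [Finset.sum_congr rfl hstep, ← Finset.mul_sum, Finset.sum_comm]
  have hinner : ∀ ρ ∈ facesC X (k + 2),
      (∑ η ∈ (facesC X (ℓ+1)).filter (fun η => η ⊆ σ ∧ η ⊆ τ),
        (if σ ⊆ ρ ∧ τ ⊆ ρ then
          sCoef ℓ η σ * sCoef ℓ η τ * ((k : ℝ) + 1) *
            (incSign (ρ \ η) (σ \ η) * incSign (ρ \ η) (τ \ η)) * w ρ else 0))
      = if σ ⊆ ρ ∧ τ ⊆ ρ then
          (((k : ℝ) - ℓ) * (incSign ρ σ * incSign ρ τ)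
            + ((ℓ : ℝ) + 1) * (if σ = τ then 1 else 0)) * w ρ
        else 0 := by
    intro ρ hρ
    obtain ⟨hρX, hρc⟩ := mem_facesC.mp hρ
    by_cases hc : σ ⊆ ρ ∧ τ ⊆ ρ
    · simp only [if_pos hc]
      rw [hF, ← key_sum hlk hσc hτc hρc hc.1 hc.2, Finset.sum_mul]
    · simp only [if_neg hc, Finset.sum_const_zero]
  rw [Finset.sum_congr rfl hinner]
  have hE : symLapUpE X w k σ τ
      = A * ∑ ρ ∈ facesC X (k + 2),
          (if σ ⊆ ρ ∧ τ ⊆ ρ then incSign ρ σ * incSign ρ τ * w ρ else 0) := by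
    rw [symLapUpE, dif_pos ⟨hσ, hτ⟩,
      symLapUp_apply X w k (fun ρ h => hw ρ (mem_facesC.mp h).1) ⟨σ, hσ⟩ ⟨τ, hτ⟩, hA]
  rw [hE]
  have hR2 : ((ℓ : ℝ) + 1) * (if σ = τ then wdeg X w σ else 0)
      = A * ∑ ρ ∈ facesC X (k + 2),
          (if σ ⊆ ρ ∧ τ ⊆ ρ then ((ℓ : ℝ) + 1) * (if σ = τ then 1 else 0) * w ρ else 0) := by
    by_cases hst : σ = τ
    · subst hst
      rw [if_pos rfl, wdeg_eq hσX hσc hwσ]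
      have hfact : ∀ S : ℝ,
          ((ℓ:ℝ)+1) * ((Real.sqrt (w σ))⁻¹ * (Real.sqrt (w σ))⁻¹ * S)
            = A * (((ℓ:ℝ)+1) * S) := by
        intro S; rw [hA]; ring
      rw [hfact, Finset.mul_sum]
      congr 1
      refine Finset.sum_congr rfl fun ρ _ => ?_
      by_cases h : σ ⊆ ρ
      · simp [h]
      · simp [h]
    · rw [if_neg hst]
      have hz : ∀ ρ ∈ facesC X (k + 2),
          (if σ ⊆ ρ ∧ τ ⊆ ρ then ((ℓ : ℝ) + 1) * (if σ = τ then 1 else 0) * w ρ else 0)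
            = 0 := by
        intro ρ _
        simp [hst]
      rw [Finset.sum_congr rfl hz, Finset.sum_const_zero, mul_zero, mul_zero]
  rw [hR2]
  have hsum : ∑ ρ ∈ facesC X (k + 2),
      (if σ ⊆ ρ ∧ τ ⊆ ρ then
        (((k : ℝ) - ℓ) * (incSign ρ σ * incSign ρ τ)
          + ((ℓ : ℝ) + 1) * (if σ = τ then 1 else 0)) * w ρ else 0)
      = ((k : ℝ) - ℓ) * (∑ ρ ∈ facesC X (k + 2),
          (if σ ⊆ ρ ∧ τ ⊆ ρ then incSign ρ σ * incSign ρ τ * w ρ else 0))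
        + ∑ ρ ∈ facesC X (k + 2),
          (if σ ⊆ ρ ∧ τ ⊆ ρ then ((ℓ : ℝ) + 1) * (if σ = τ then 1 else 0) * w ρ else 0) := by
    rw [Finset.mul_sum, ← Finset.sum_add_distrib]
    refine Finset.sum_congr rfl fun ρ _ => ?_
    split_ifs <;> ring
  rw [hsum]
  ring

end Garland
end

section
/- Let X be a simplicial complex on a linearly ordered finite vertex set and let 0 ≤ ℓ < k ≤ dim(X). Let η ∈ X(ℓ) and let τ ∈ X(k) with η ⊆ τ. Let u ∈ τ∖η and set σ = τ∖{u}. Then s_η(τ) · (τ∖η : σ∖η) = √((k−ℓ)/(k+1)) · s_η(σ) · (τ : σ). -/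
open Matrix BigOperators

namespace Garland

variable {V : Type*}

private lemma card_filter_product_eq_sum [LinearOrder V] (s t : Finset V) :
    (((s ×ˢ t).filter fun p => p.2 < p.1).card) = ∑ i ∈ s, (t.filter fun j => j < i).card := by
  rw [Finset.card_filter, Finset.sum_product]
  simp only [Finset.card_filter]

/-- Sign lemma. For `η ∈ X(ℓ)`, `τ ∈ X(k)` with `η ⊆ τ`, `u ∈ τ∖η` and
`σ = τ∖{u}`: `s_η(τ)·(τ∖η : σ∖η) = √((k−ℓ)/(k+1))·s_η(σ)·(τ : σ)`. -/
theorem sign_lemma_one {V : Type*} [Fintype V] [LinearOrder V]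
    (X : Finset (Finset V)) (hX : IsComplex X)
    (ℓ k : ℕ) (hlk : ℓ < k) (hk : k ≤ dimX X)
    (η τ : Finset V) (hη : η ∈ facesC X (ℓ + 1)) (hτ : τ ∈ facesC X (k + 1))
    (hsub : η ⊆ τ) (u : V) (hu : u ∈ τ \ η) :
    sCoef ℓ η τ * incSign (τ \ η) ((τ.erase u) \ η) =
      Real.sqrt (((k : ℝ) - ℓ) / ((k : ℝ) + 1)) * sCoef ℓ η (τ.erase u) *
        incSign τ (τ.erase u) := by
  classical
  obtain ⟨hu', huη⟩ := Finset.mem_sdiff.mp hu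
  have hτc : τ.card = k + 1 := (Finset.mem_filter.mp hτ).2
  have hσc : (τ.erase u).card = k := by rw [Finset.card_erase_of_mem hu', hτc]; omega
  have hE : (τ.erase u) \ η = (τ \ η).erase u := Finset.erase_sdiff_comm τ η u
  have h1 : incSign (τ \ η) ((τ.erase u) \ η)
      = (-1:ℝ) ^ ((τ \ η).filter fun v => v < u).card := by
    rw [hE, incSign, Finset.sdiff_erase_self hu, Finset.sum_singleton]
  have h2 : incSign τ (τ.erase u) = (-1:ℝ) ^ (τ.filter fun v => v < u).card := by
    rw [incSign, Finset.sdiff_erase_self hu', Finset.sum_singleton]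
  -- exponent bookkeeping
  set f : V → ℕ := fun i => (η.filter fun j => j < i).card with hf
  have hNτ : (((τ \ η) ×ˢ η).filter fun p => p.2 < p.1).card
      = f u + ((((τ \ η).erase u) ×ˢ η).filter fun p => p.2 < p.1).card := by
    rw [card_filter_product_eq_sum, card_filter_product_eq_sum,
      ← Finset.add_sum_erase _ f hu]
  have hτfilter : (τ.filter fun v => v < u).card
      = f u + ((τ \ η).filter fun v => v < u).card := by
    have hτu : η ∪ (τ \ η) = τ := Finset.union_sdiff_of_subset hsub
    have hdisj : Disjoint (η.filter fun v => v < u) ((τ \ η).filter fun v => v < u) :=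
      Finset.disjoint_filter_filter Finset.disjoint_sdiff
    conv_lhs => rw [← hτu]
    rw [Finset.filter_union, Finset.card_union_of_disjoint hdisj]
  -- the coefficient identity
  have hc1 : 0 < k.choose (ℓ + 1) := Nat.choose_pos hlk
  have hc2 : 0 < (k + 1).choose (ℓ + 1) := Nat.choose_pos (by omega)
  have hch : (k.choose (ℓ + 1) : ℝ) * ((k : ℝ) + 1)
      = ((k + 1).choose (ℓ + 1) : ℝ) * ((k : ℝ) - ℓ) := by
    have h0 : k.choose (ℓ + 1) * (k + 1) = (k + 1).choose (ℓ + 1) * (k - ℓ) := by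
      have h1 := Nat.choose_mul_succ_eq k (ℓ + 1)
      rwa [Nat.succ_sub_succ] at h1
    have hcast : ((k.choose (ℓ + 1) * (k + 1) : ℕ) : ℝ)
        = (((k + 1).choose (ℓ + 1) * (k - ℓ) : ℕ) : ℝ) := by exact_mod_cast h0
    push_cast [Nat.cast_sub hlk.le] at hcast
    linarith
  have hratio : ((k : ℝ) - ℓ) / ((k : ℝ) + 1)
      = (k.choose (ℓ + 1) : ℝ) / ((k + 1).choose (ℓ + 1) : ℝ) := by
    have h2pos : (0:ℝ) < ((k + 1).choose (ℓ + 1) : ℝ) := by exact_mod_cast hc2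
    have hkpos : (0:ℝ) < (k : ℝ) + 1 := by positivity
    field_simp
    linarith [hch]
  have hcoef : (Real.sqrt ((k + 1).choose (ℓ + 1)))⁻¹
      = Real.sqrt (((k : ℝ) - ℓ) / ((k : ℝ) + 1)) * (Real.sqrt (k.choose (ℓ + 1)))⁻¹ := by
    rw [hratio, Real.sqrt_div (by positivity)]
    have h1pos : (0:ℝ) < Real.sqrt (k.choose (ℓ + 1)) :=
      Real.sqrt_pos.mpr (by exact_mod_cast hc1)
    field_simp
  -- assemble
  rw [sCoef, sCoef, hσc, hτc, h1, h2, hE, hcoef]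
  have hsign : (-1:ℝ) ^ (((τ \ η) ×ˢ η).filter fun p => p.2 < p.1).card *
      (-1:ℝ) ^ ((τ \ η).filter fun v => v < u).card
      = (-1:ℝ) ^ ((((τ \ η).erase u) ×ˢ η).filter fun p => p.2 < p.1).card *
        (-1:ℝ) ^ (τ.filter fun v => v < u).card := by
    rw [← pow_add, ← pow_add]
    congr 1
    omega
  calc (Real.sqrt (((k : ℝ) - ℓ) / ((k : ℝ) + 1)) * (Real.sqrt (k.choose (ℓ + 1)))⁻¹) *
        (-1:ℝ) ^ (((τ \ η) ×ˢ η).filter fun p => p.2 < p.1).card *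
        (-1:ℝ) ^ ((τ \ η).filter fun v => v < u).card
      = (Real.sqrt (((k : ℝ) - ℓ) / ((k : ℝ) + 1)) * (Real.sqrt (k.choose (ℓ + 1)))⁻¹) *
        ((-1:ℝ) ^ (((τ \ η) ×ˢ η).filter fun p => p.2 < p.1).card *
        (-1:ℝ) ^ ((τ \ η).filter fun v => v < u).card) := by ring
    _ = (Real.sqrt (((k : ℝ) - ℓ) / ((k : ℝ) + 1)) * (Real.sqrt (k.choose (ℓ + 1)))⁻¹) *
        ((-1:ℝ) ^ ((((τ \ η).erase u) ×ˢ η).filter fun p => p.2 < p.1).card *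
        (-1:ℝ) ^ (τ.filter fun v => v < u).card) := by rw [hsign]
    _ = Real.sqrt (((k : ℝ) - ℓ) / ((k : ℝ) + 1)) * ((Real.sqrt (k.choose (ℓ + 1)))⁻¹ *
        (-1:ℝ) ^ ((((τ \ η).erase u) ×ˢ η).filter fun p => p.2 < p.1).card) *
        (-1:ℝ) ^ (τ.filter fun v => v < u).card := by ring


end Garland
end

section
/- Let X be a simplicial complex on a linearly ordered finite vertex set and let 0 ≤ ℓ < k ≤ dim(X). Let η ∈ X(ℓ) and let σ, τ ∈ X(k) with η ⊆ σ, η ⊆ τ, and |σ ∩ τ| = k. Then (σ : σ∩τ)(τ : σ∩τ) = C(k+1, ℓ+1) · s_η(σ) s_η(τ) · (σ∖η : (σ∩τ)∖η) · (τ∖η : (σ∩τ)∖η). -/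
open Matrix BigOperators

namespace Garland

variable {V : Type*}

/-- Sign lemma. For `η ∈ X(ℓ)` and `σ, τ ∈ X(k)` with `η ⊆ σ`, `η ⊆ τ`
and `|σ ∩ τ| = k`:
`(σ : σ∩τ)(τ : σ∩τ) = C(k+1,ℓ+1)·s_η(σ) s_η(τ)·(σ∖η : (σ∩τ)∖η)·(τ∖η : (σ∩τ)∖η)`. -/
theorem sign_lemma_two {V : Type*} [Fintype V] [LinearOrder V]
    (X : Finset (Finset V)) (hX : IsComplex X)
    (ℓ k : ℕ) (hlk : ℓ < k) (hk : k ≤ dimX X)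
    (η σ τ : Finset V) (hη : η ∈ facesC X (ℓ + 1))
    (hσ : σ ∈ facesC X (k + 1)) (hτ : τ ∈ facesC X (k + 1))
    (hησ : η ⊆ σ) (hητ : η ⊆ τ) (hcap : (σ ∩ τ).card = k) :
    incSign σ (σ ∩ τ) * incSign τ (σ ∩ τ) =
      ((k + 1).choose (ℓ + 1) : ℝ) * (sCoef ℓ η σ * sCoef ℓ η τ) *
        (incSign (σ \ η) ((σ ∩ τ) \ η) * incSign (τ \ η) ((σ ∩ τ) \ η)) := by
  classical
  set ρ := σ ∩ τ with hρdef
  have hσcard : σ.card = k + 1 := (Finset.mem_filter.mp hσ).2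
  have hτcard : τ.card = k + 1 := (Finset.mem_filter.mp hτ).2
  have hρσ : ρ ⊆ σ := Finset.inter_subset_left
  have hρτ : ρ ⊆ τ := Finset.inter_subset_right
  have hηρ : η ⊆ ρ := Finset.subset_inter hησ hητ
  obtain ⟨u, hu⟩ : ∃ u, σ \ ρ = {u} := Finset.card_eq_one.mp (by
    rw [Finset.card_sdiff_of_subset hρσ, hσcard, hcap]; omega)
  obtain ⟨u', hu'⟩ : ∃ v, τ \ ρ = {v} := Finset.card_eq_one.mp (by
    rw [Finset.card_sdiff_of_subset hρτ, hτcard, hcap]; omega)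
  have key : ∀ (s : Finset V) (v : V), ρ ⊆ s → s \ ρ = {v} →
      incSign s ρ = (-1 : ℝ) ^ (((s \ η).filter fun x => x < v).card +
          (η.filter fun x => x < v).card) ∧
      incSign (s \ η) (ρ \ η) = (-1 : ℝ) ^ ((s \ η).filter fun x => x < v).card ∧
      (((s \ η) ×ˢ η).filter fun p => p.2 < p.1).card =
        (η.filter fun x => x < v).card +
          (((ρ \ η) ×ˢ η).filter fun p => p.2 < p.1).card := by
    intro s v hρs hv
    have hηs : η ⊆ s := hηρ.trans hρs
    have hvs' : v ∈ s \ ρ := by rw [hv]; exact Finset.mem_singleton_self v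
    have hvs : v ∈ s := (Finset.mem_sdiff.mp hvs').1
    have hvρ : v ∉ ρ := (Finset.mem_sdiff.mp hvs').2
    have hvη : v ∉ η := fun h => hvρ (hηρ h)
    have hsplit : (s.filter fun x => x < v).card =
        ((s \ η).filter fun x => x < v).card + (η.filter fun x => x < v).card := by
      conv_lhs => rw [← Finset.sdiff_union_of_subset hηs]
      rw [Finset.filter_union, Finset.card_union_of_disjoint
        (Finset.disjoint_filter_filter Finset.sdiff_disjoint)]
    have hsd : (s \ η) \ (ρ \ η) = {v} := by
      rw [← hv]; ext x
      simp only [Finset.mem_sdiff, not_and, not_not]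
      constructor
      · rintro ⟨⟨hxs, hxη⟩, h2⟩
        exact ⟨hxs, fun hxρ => hxη (h2 hxρ)⟩
      · rintro ⟨hxs, hxρ⟩
        exact ⟨⟨hxs, fun h => hxρ (hηρ h)⟩, fun h => absurd h hxρ⟩
    have hinc1 : incSign s ρ = (-1 : ℝ) ^ (s.filter fun x => x < v).card := by
      rw [incSign, hv, Finset.sum_singleton]
    have hinc2 : incSign (s \ η) (ρ \ η) =
        (-1 : ℝ) ^ ((s \ η).filter fun x => x < v).card := by
      rw [incSign, hsd, Finset.sum_singleton]
    refine ⟨by rw [hinc1, hsplit], hinc2, ?_⟩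
    have hsη : s \ η = {v} ∪ (ρ \ η) := by
      ext x
      simp only [Finset.mem_sdiff, Finset.mem_union, Finset.mem_singleton]
      constructor
      · rintro ⟨hxs, hxη⟩
        by_cases hxρ : x ∈ ρ
        · exact Or.inr ⟨hxρ, hxη⟩
        · left
          have : x ∈ s \ ρ := Finset.mem_sdiff.mpr ⟨hxs, hxρ⟩
          rw [hv] at this; exact Finset.mem_singleton.mp this
      · rintro (rfl | ⟨hxρ, hxη⟩)
        · exact ⟨hvs, hvη⟩
        · exact ⟨hρs hxρ, hxη⟩
    have hdisj : Disjoint ({v} ×ˢ η) ((ρ \ η) ×ˢ η) := by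
      rw [Finset.disjoint_left]
      rintro ⟨a, b⟩ hab hab'
      have h1 : a = v := (Finset.mem_product.mp hab).1 |> Finset.mem_singleton.mp
      have h2 : a ∈ ρ \ η := (Finset.mem_product.mp hab').1
      exact hvρ (h1 ▸ (Finset.mem_sdiff.mp h2).1)
    have hfsing : (({v} ×ˢ η).filter fun p => p.2 < p.1) =
        {v} ×ˢ (η.filter fun x => x < v) := by
      ext ⟨a, b⟩
      simp only [Finset.mem_filter, Finset.mem_product, Finset.mem_singleton]
      constructor
      · rintro ⟨⟨rfl, hb⟩, hlt⟩; exact ⟨rfl, hb, hlt⟩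
      · rintro ⟨rfl, hb, hlt⟩; exact ⟨⟨rfl, hb⟩, hlt⟩
    rw [hsη, Finset.union_product, Finset.filter_union,
      Finset.card_union_of_disjoint
        (Finset.disjoint_filter_filter hdisj),
      hfsing, Finset.card_product, Finset.card_singleton, one_mul]
  obtain ⟨kσ1, kσ2, kσ3⟩ := key σ u hρσ hu
  obtain ⟨kτ1, kτ2, kτ3⟩ := key τ u' hρτ hu'
  -- abbreviations
  set Bσ := ((σ \ η).filter fun x => x < u).card
  set Bτ := ((τ \ η).filter fun x => x < u').card
  set Eσ := (η.filter fun x => x < u).card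
  set Eτ := (η.filter fun x => x < u').card
  set M := (((ρ \ η) ×ˢ η).filter fun p => p.2 < p.1).card
  have hsσ : sCoef ℓ η σ =
      (Real.sqrt ((k + 1).choose (ℓ + 1)))⁻¹ * (-1 : ℝ) ^ (Eσ + M) := by
    rw [sCoef, hσcard, kσ3]
  have hsτ : sCoef ℓ η τ =
      (Real.sqrt ((k + 1).choose (ℓ + 1)))⁻¹ * (-1 : ℝ) ^ (Eτ + M) := by
    rw [sCoef, hτcard, kτ3]
  have hCpos : 0 < ((k + 1).choose (ℓ + 1) : ℝ) := by
    exact_mod_cast Nat.choose_pos (by omega)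
  have hsqrt : Real.sqrt ((k + 1).choose (ℓ + 1)) *
      Real.sqrt ((k + 1).choose (ℓ + 1)) = ((k + 1).choose (ℓ + 1) : ℝ) :=
    Real.mul_self_sqrt (le_of_lt hCpos)
  have hsqrtne : Real.sqrt ((k + 1).choose (ℓ + 1)) ≠ 0 := by
    intro h
    rw [h, mul_zero] at hsqrt
    exact absurd hsqrt.symm (ne_of_gt hCpos)
  have hM : (-1 : ℝ) ^ M * (-1 : ℝ) ^ M = 1 := by
    rw [← pow_add, ← two_mul, pow_mul]; norm_num
  rw [kσ1, kτ1, kσ2, kτ2, hsσ, hsτ]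
  rw [pow_add, pow_add, pow_add, pow_add]
  field_simp
  ring_nf
  rw [mul_comm M 2, pow_mul, neg_one_sq, one_pow, mul_one]
  exact Real.sq_sqrt (Nat.cast_nonneg _)

end Garland
end
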